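/- arXiv:2304.11577 — 6 statements merged into one kernel-verified Lean document; each statement's English description precedes it below -/
import Mathlib

section
/- Fix T > 0, σ ∈ ℝ, R ∈ (0,1] and ρ > 0 with ρ ≠ σ². Then for every s ∈ [0,T] the quantity (1 - R + R(ρ-σ²)) e^{(ρ-σ²) T} - (1-R) e^{(ρ-σ²) s} is nonzero, and the function P(s) = R(ρ-σ²) e^{(ρ-σ²) s} / ((1 - R + R(ρ-σ²)) e^{(ρ-σ²) T} - (1-R) e^{(ρ-σ²) s}) is differentiable on [0,T] and is a solution of the Riccati equation P'(s) + σ² P(s) - ρ P(s) - ((1-R)/R) P(s)² = 0 for s ∈ [0,T] with terminal condition P(T) = 1. -/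
open Real Set

/-!
With `a = ρ - σ²`, the function `P = r a e^{a s} / (k - q e^{a s})` satisfies the Bernoulli
equation `P' = a P + (q / r) P²` for all constants `r, k, q` wherever its denominator is
nonzero, which is the Riccati equation for `r = R`, `q = 1 - R`. The choice
`k = (1 - R + R a) e^{a T}` makes the denominator equal `R a e^{a T}` at `s = T`, whence
`P(T) = 1`; for `s ≤ T` the denominator is `R a e^{a T} + (1 - R)(e^{a T} - e^{a s})`, a sum of
a term of the sign of `a` and one of the same weak sign, so it does not vanish.
-/

theorem mul_sub_exp_mul_nonneg {a s T : ℝ} (hs : s ≤ T) :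
    0 ≤ a * (exp (a * T) - exp (a * s)) := by
  rcases le_total 0 a with ha | ha
  · exact mul_nonneg ha (sub_nonneg.mpr (exp_le_exp.mpr (mul_le_mul_of_nonneg_left hs ha)))
  · exact mul_nonneg_of_nonpos_of_nonpos ha
      (sub_nonpos.mpr (exp_le_exp.mpr (mul_le_mul_of_nonpos_left hs ha)))

theorem riccati_denom_ne_zero {a R s T : ℝ} (ha : a ≠ 0) (hR0 : 0 < R) (hR1 : R ≤ 1)
    (hs : s ≤ T) : (1 - R + R * a) * exp (a * T) - (1 - R) * exp (a * s) ≠ 0 := by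
  have hmain : 0 < R * a ^ 2 * exp (a * T) := by positivity
  have hrest : 0 ≤ (1 - R) * (a * (exp (a * T) - exp (a * s))) :=
    mul_nonneg (sub_nonneg.mpr hR1) (mul_sub_exp_mul_nonneg hs)
  have hpos : 0 < a * ((1 - R + R * a) * exp (a * T) - (1 - R) * exp (a * s)) := by
    linear_combination hmain + hrest
  exact right_ne_zero_of_mul hpos.ne'

theorem hasDerivAt_mul_exp_div_sub_mul_exp {r k q a s : ℝ} {f : ℝ → ℝ}
    (hf : f = fun t => r * a * exp (a * t) / (k - q * exp (a * t)))
    (hs : k - q * exp (a * s) ≠ 0) :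
    HasDerivAt f (a * f s + q / r * f s ^ 2) s := by
  have hexp : HasDerivAt (fun t => exp (a * t)) (exp (a * s) * a) s := by
    simpa using ((hasDerivAt_id s).const_mul a).exp
  have hquot := (hexp.const_mul (r * a)).div ((hasDerivAt_const s k).sub (hexp.const_mul q)) hs
  subst hf
  simp only [Pi.sub_apply] at hquot
  refine hquot.congr_deriv ?_
  rcases eq_or_ne r 0 with rfl | hr
  · simp
  · field_simp
    ring

theorem zero_sum_game_riccati_solution_general
    (T σ R ρ : ℝ) (hR0 : 0 < R) (hR1 : R ≤ 1)
    (hne : ρ ≠ σ ^ 2)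
    (P : ℝ → ℝ)
    (hP : P = fun s : ℝ =>
      R * (ρ - σ ^ 2) * Real.exp ((ρ - σ ^ 2) * s) /
        ((1 - R + R * (ρ - σ ^ 2)) * Real.exp ((ρ - σ ^ 2) * T)
          - (1 - R) * Real.exp ((ρ - σ ^ 2) * s))) :
    (∀ s ∈ Set.Icc (0 : ℝ) T,
      (1 - R + R * (ρ - σ ^ 2)) * Real.exp ((ρ - σ ^ 2) * T)
        - (1 - R) * Real.exp ((ρ - σ ^ 2) * s) ≠ 0) ∧
    (∃ P' : ℝ → ℝ, ∀ s ∈ Set.Icc (0 : ℝ) T,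
      HasDerivAt P (P' s) s ∧
      P' s + σ ^ 2 * P s - ρ * P s - ((1 - R) / R) * (P s) ^ 2 = 0) ∧
    P T = 1 := by
  have hden : ∀ s ≤ T, (1 - R + R * (ρ - σ ^ 2)) * exp ((ρ - σ ^ 2) * T)
      - (1 - R) * exp ((ρ - σ ^ 2) * s) ≠ 0 :=
    fun s hs => riccati_denom_ne_zero (sub_ne_zero.mpr hne) hR0 hR1 hs
  refine ⟨fun s hs => hden s hs.2, ⟨_, fun s hs =>
    ⟨hasDerivAt_mul_exp_div_sub_mul_exp hP (hden s hs.2), by ring⟩⟩, ?_⟩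
  rw [hP, div_eq_one_iff_eq (hden T le_rfl)]
  ring

/-- With `T > 0`, `σ ∈ ℝ`, `R ∈ (0,1]`, `ρ > 0`, `ρ ≠ σ²`, for every
`s ∈ [0,T]` the denominator `(1 - R + R(ρ-σ²)) e^{(ρ-σ²)T} - (1-R) e^{(ρ-σ²)s}` is
nonzero, and `P(s) = R(ρ-σ²) e^{(ρ-σ²)s} / ((1 - R + R(ρ-σ²)) e^{(ρ-σ²)T} - (1-R) e^{(ρ-σ²)s})`
is differentiable on `[0,T]` and solves
`P'(s) + σ² P(s) - ρ P(s) - ((1-R)/R) P(s)² = 0` with `P(T) = 1`. -/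
theorem zero_sum_game_riccati_solution
    (T σ R ρ : ℝ) (hT : 0 < T) (hR0 : 0 < R) (hR1 : R ≤ 1) (hρ : 0 < ρ)
    (hne : ρ ≠ σ ^ 2)
    (P : ℝ → ℝ)
    (hP : P = fun s : ℝ =>
      R * (ρ - σ ^ 2) * Real.exp ((ρ - σ ^ 2) * s) /
        ((1 - R + R * (ρ - σ ^ 2)) * Real.exp ((ρ - σ ^ 2) * T)
          - (1 - R) * Real.exp ((ρ - σ ^ 2) * s))) :
    (∀ s ∈ Set.Icc (0 : ℝ) T,
      (1 - R + R * (ρ - σ ^ 2)) * Real.exp ((ρ - σ ^ 2) * T)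
        - (1 - R) * Real.exp ((ρ - σ ^ 2) * s) ≠ 0) ∧
    (∃ P' : ℝ → ℝ, ∀ s ∈ Set.Icc (0 : ℝ) T,
      HasDerivAt P (P' s) s ∧
      P' s + σ ^ 2 * P s - ρ * P s - ((1 - R) / R) * (P s) ^ 2 = 0) ∧
    P T = 1 :=
  zero_sum_game_riccati_solution_general T σ R ρ hR0 hR1 hne P hP
end

section
/- Fix T > 0, σ ∈ ℝ, ρ ∈ ℝ, c ≥ 0 and G ≥ 0. Then the Riccati equation P'(s) + σ² P(s) - ρ P(s) - c P(s)² = 0 on [0,T] with terminal condition P(T) = G admits exactly one differentiable solution P : [0,T] → ℝ, and this solution satisfies 0 ≤ P(s) ≤ G e^{(σ² - ρ)(T - s)} for all s ∈ [0,T]. -/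
open Real Set

/-!
The substitution `P = 1/D` (Bernoulli) turns the Riccati equation into the linear equation
`D' - (σ² - ρ) D + c = 0`, which gives the explicit solution
`P(s) = G e^{k(T-s)} / (1 + c G ∫_s^T e^{k(T-u)} du)` with `k = σ² - ρ`. For `c, G ≥ 0` the
denominator is at least `1` on `s ≤ T`, which yields both bounds. Uniqueness holds because the
right-hand side `x ↦ c x² - k x` is locally Lipschitz and any two solutions on the compact
interval `[0, T]` stay in a compact set, where it is Lipschitz.
-/

section Uniqueness

variable {E : Type*} [NormedAddCommGroup E] [NormedSpace ℝ E]

theorem eqOn_Icc_of_hasDerivWithinAt_of_locallyLipschitz {v : E → E} (hv : LocallyLipschitz v)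
    {a b : ℝ} {f g : ℝ → E}
    (hf : ∀ t ∈ Icc a b, HasDerivWithinAt f (v (f t)) (Icc a b) t)
    (hg : ∀ t ∈ Icc a b, HasDerivWithinAt g (v (g t)) (Icc a b) t)
    (hb : f b = g b) : EqOn f g (Icc a b) := by
  have hfc : ContinuousOn f (Icc a b) := fun t ht ↦ (hf t ht).continuousWithinAt
  have hgc : ContinuousOn g (Icc a b) := fun t ht ↦ (hg t ht).continuousWithinAt
  set K := f '' Icc a b ∪ g '' Icc a b
  have hK : IsCompact K :=
    (isCompact_Icc.image_of_continuousOn hfc).union (isCompact_Icc.image_of_continuousOn hgc)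
  obtain ⟨L, hL⟩ := hv.locallyLipschitzOn.exists_lipschitzOnWith_of_compact hK
  exact ODE_solution_unique_of_mem_Icc_left (v := fun _ ↦ v) (s := fun _ ↦ K)
    (fun _ _ ↦ hL) hfc
    (fun t ht ↦ (hf t (Ioc_subset_Icc_self ht)).mono_of_mem_nhdsWithin (Icc_mem_nhdsLE_of_mem ht))
    (fun t ht ↦ Or.inl ⟨t, Ioc_subset_Icc_self ht, rfl⟩) hgc
    (fun t ht ↦ (hg t (Ioc_subset_Icc_self ht)).mono_of_mem_nhdsWithin (Icc_mem_nhdsLE_of_mem ht))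
    (fun t ht ↦ Or.inr ⟨t, Ioc_subset_Icc_self ht, rfl⟩) hb

end Uniqueness

namespace Riccati

variable {k c G T s : ℝ}

noncomputable def denom (k c G T s : ℝ) : ℝ :=
  1 + c * G * ∫ u in s..T, exp (k * (T - u))

noncomputable def solution (k c G T s : ℝ) : ℝ :=
  G * exp (k * (T - s)) / denom k c G T s

theorem one_le_denom (hc : 0 ≤ c) (hG : 0 ≤ G) (hs : s ≤ T) : 1 ≤ denom k c G T s := by
  have hI : 0 ≤ ∫ u in s..T, exp (k * (T - u)) :=
    intervalIntegral.integral_nonneg hs fun _ _ ↦ (exp_pos _).le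
  unfold denom
  nlinarith [mul_nonneg hc hG]

theorem hasDerivAt_denom (k c G T s : ℝ) :
    HasDerivAt (denom k c G T) (-(c * G * exp (k * (T - s)))) s := by
  have hcont : Continuous fun u ↦ exp (k * (T - u)) := by fun_prop
  have hI := intervalIntegral.integral_hasDerivAt_left (hcont.intervalIntegrable s T)
    (hcont.stronglyMeasurableAtFilter _ _) hcont.continuousAt
  have h := (hI.const_mul (c * G)).const_add 1
  rw [mul_neg] at h
  exact h

theorem hasDerivAt_solution (hc : 0 ≤ c) (hG : 0 ≤ G) (hs : s ≤ T) :
    HasDerivAt (solution k c G T)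
      (c * solution k c G T s ^ 2 - k * solution k c G T s) s := by
  have hD : denom k c G T s ≠ 0 := (one_pos.trans_le (one_le_denom hc hG hs)).ne'
  have hE : HasDerivAt (fun s ↦ exp (k * (T - s))) (exp (k * (T - s)) * (k * -1)) s :=
    (((hasDerivAt_id' s).const_sub T).const_mul k).exp
  refine ((hE.const_mul G).div (hasDerivAt_denom k c G T s) hD).congr_deriv ?_
  unfold solution
  field_simp
  ring

theorem solution_self (k c G T : ℝ) : solution k c G T T = G := by
  simp [solution, denom]

theorem solution_nonneg (hc : 0 ≤ c) (hG : 0 ≤ G) (hs : s ≤ T) : 0 ≤ solution k c G T s :=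
  div_nonneg (by positivity) (zero_le_one.trans (one_le_denom hc hG hs))

theorem solution_le (hc : 0 ≤ c) (hG : 0 ≤ G) (hs : s ≤ T) :
    solution k c G T s ≤ G * exp (k * (T - s)) :=
  div_le_self (by positivity) (one_le_denom hc hG hs)

end Riccati

theorem riccati_existence_uniqueness_bound_general
    (T σ ρ c G : ℝ) (hc : 0 ≤ c) (hG : 0 ≤ G) :
    ∃ P P' : ℝ → ℝ,
      (∀ s ∈ Set.Icc (0 : ℝ) T,
        HasDerivWithinAt P (P' s) (Set.Icc (0 : ℝ) T) s ∧
        P' s + σ ^ 2 * P s - ρ * P s - c * (P s) ^ 2 = 0) ∧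
      P T = G ∧
      (∀ s ∈ Set.Icc (0 : ℝ) T,
        0 ≤ P s ∧ P s ≤ G * Real.exp ((σ ^ 2 - ρ) * (T - s))) ∧
      (∀ Q Q' : ℝ → ℝ,
        (∀ s ∈ Set.Icc (0 : ℝ) T,
          HasDerivWithinAt Q (Q' s) (Set.Icc (0 : ℝ) T) s ∧
          Q' s + σ ^ 2 * Q s - ρ * Q s - c * (Q s) ^ 2 = 0) →
        Q T = G → Set.EqOn Q P (Set.Icc (0 : ℝ) T)) := by
  set v : ℝ → ℝ := fun x ↦ c * x ^ 2 - (σ ^ 2 - ρ) * x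
  set P := Riccati.solution (σ ^ 2 - ρ) c G T
  have hP : ∀ s ∈ Icc 0 T, HasDerivWithinAt P (v (P s)) (Icc 0 T) s := fun s hs ↦
    (Riccati.hasDerivAt_solution hc hG hs.2).hasDerivWithinAt
  refine ⟨P, v ∘ P, fun s hs ↦ ⟨hP s hs, by simp only [v, Function.comp]; ring⟩,
    Riccati.solution_self _ _ _ _,
    fun s hs ↦ ⟨Riccati.solution_nonneg hc hG hs.2, Riccati.solution_le hc hG hs.2⟩, ?_⟩
  intro Q Q' hQ hQT
  have hv : LocallyLipschitz v := (by fun_prop : ContDiff ℝ 1 v).locallyLipschitz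
  refine eqOn_Icc_of_hasDerivWithinAt_of_locallyLipschitz hv (fun s hs ↦ ?_) hP
    (hQT.trans (Riccati.solution_self _ _ _ _).symm)
  obtain ⟨hQd, hQeq⟩ := hQ s hs
  rwa [show v (Q s) = Q' s by simp only [v]; linarith]

/-- With `T > 0`, `σ, ρ ∈ ℝ`, `c ≥ 0`, `G ≥ 0`, the Riccati equation
`P'(s) + σ² P(s) - ρ P(s) - c P(s)² = 0` on `[0,T]` with `P(T) = G` admits exactly
one differentiable solution, and it satisfies `0 ≤ P(s) ≤ G e^{(σ²-ρ)(T-s)}`. -/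
theorem riccati_existence_uniqueness_bound
    (T σ ρ c G : ℝ) (hT : 0 < T) (hc : 0 ≤ c) (hG : 0 ≤ G) :
    ∃ P P' : ℝ → ℝ,
      (∀ s ∈ Set.Icc (0 : ℝ) T,
        HasDerivWithinAt P (P' s) (Set.Icc (0 : ℝ) T) s ∧
        P' s + σ ^ 2 * P s - ρ * P s - c * (P s) ^ 2 = 0) ∧
      P T = G ∧
      (∀ s ∈ Set.Icc (0 : ℝ) T,
        0 ≤ P s ∧ P s ≤ G * Real.exp ((σ ^ 2 - ρ) * (T - s))) ∧
      (∀ Q Q' : ℝ → ℝ,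
        (∀ s ∈ Set.Icc (0 : ℝ) T,
          HasDerivWithinAt Q (Q' s) (Set.Icc (0 : ℝ) T) s ∧
          Q' s + σ ^ 2 * Q s - ρ * Q s - c * (Q s) ^ 2 = 0) →
        Q T = G → Set.EqOn Q P (Set.Icc (0 : ℝ) T)) :=
  riccati_existence_uniqueness_bound_general T σ ρ c G hc hG
end

section
/- Fix T > 0, σ ∈ ℝ, R ∈ (0,1], t₀ ∈ [0,T), and let α(t) = λ e^{-ρ t} + (1-λ) e^{-γ t} with γ > ρ > 0 and λ ∈ (0,1). Define Q(s) = e^{-σ²(T-s)}/α(T-t₀) + ∫_s^T e^{-σ²(r-s)}/(α(r-t₀) R) dr for s ∈ [t₀,T]. Then Q(s) > 0 for all s ∈ [t₀,T], and the function P(s) = 1/Q(s) is differentiable, strictly positive on [t₀,T], and satisfies the time-dependent Riccati equation P'(s) + σ² P(s) - P(s)²/(α(s-t₀) R) = 0 for s ∈ [t₀,T] with terminal condition P(T) = α(T-t₀). -/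
/-!
`Q` is the Duhamel representation of the solution of the backward linear equation
`Q' = σ² Q - 1/(α R)`, `Q(T) = 1/α(T-t₀)`, whose data are positive; hence `Q > 0`, and
`P = 1/Q` turns the linear equation into the Riccati equation, since `P' = -Q'/Q²`.
-/

open Real Set

/-- The solution of `Q' = k Q - h` with terminal value `Q T = c`, by variation of constants. -/
noncomputable def backwardDuhamel (k c T : ℝ) (h : ℝ → ℝ) (s : ℝ) : ℝ :=
  exp (-k * (T - s)) * c + ∫ r in s..T, exp (-k * (r - s)) * h r

section backwardDuhamel

variable {k c T : ℝ} {h : ℝ → ℝ}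

theorem backwardDuhamel_eq_exp_mul (k c T : ℝ) (h : ℝ → ℝ) (s : ℝ) :
    backwardDuhamel k c T h s =
      exp (k * s) * (exp (-k * T) * c + ∫ r in s..T, exp (-k * r) * h r) := by
  have hexp : ∀ r, exp (-k * (r - s)) = exp (k * s) * exp (-k * r) := fun r => by
    rw [← exp_add]; ring_nf
  simp only [backwardDuhamel, hexp, mul_assoc, intervalIntegral.integral_const_mul, mul_add]

theorem backwardDuhamel_self : backwardDuhamel k c T h T = c := by
  simp [backwardDuhamel]

theorem backwardDuhamel_pos {s : ℝ} (hc : 0 < c) (hsT : s ≤ T)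
    (hh : ∀ r ∈ Icc s T, 0 ≤ h r) : 0 < backwardDuhamel k c T h s := by
  have hint : 0 ≤ ∫ r in s..T, exp (-k * (r - s)) * h r :=
    intervalIntegral.integral_nonneg hsT fun r hr =>
      mul_nonneg (exp_pos _).le (hh r hr)
  exact add_pos_of_pos_of_nonneg (mul_pos (exp_pos _) hc) hint

theorem hasDerivAt_backwardDuhamel (hh : Continuous h) (s : ℝ) :
    HasDerivAt (backwardDuhamel k c T h) (k * backwardDuhamel k c T h s - h s) s := by
  have hf : Continuous fun r => exp (-k * r) * h r := by fun_prop
  have hexp : HasDerivAt (fun s => exp (k * s)) (exp (k * s) * k) s := by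
    simpa using ((hasDerivAt_id s).const_mul k).exp
  have hint : HasDerivAt (fun s => exp (-k * T) * c + ∫ r in s..T, exp (-k * r) * h r)
      (-(exp (-k * s) * h s)) s :=
    (intervalIntegral.integral_hasDerivAt_left (hf.intervalIntegrable _ _)
      (hf.stronglyMeasurableAtFilter _ _) hf.continuousAt).const_add _
  have hcancel : exp (k * s) * exp (-k * s) = 1 := by rw [← exp_add]; simp
  rw [show backwardDuhamel k c T h = _ from funext (backwardDuhamel_eq_exp_mul k c T h)]
  refine (hexp.mul hint).congr_deriv ?_
  beta_reduce
  linear_combination -h s * hcancel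

end backwardDuhamel

theorem HasDerivAt.one_div_of_linear {Q : ℝ → ℝ} {k a s : ℝ}
    (hQ : HasDerivAt Q (k * Q s - a) s) (hQs : Q s ≠ 0) :
    HasDerivAt (fun s => 1 / Q s) (a * (1 / Q s) ^ 2 - k * (1 / Q s)) s := by
  simp only [one_div]
  refine (hQ.inv hQs).congr_deriv ?_
  field_simp
  ring

theorem single_player_precommitment_riccati_general
    (T σ R t₀ ρ γ l : ℝ) (hR0 : 0 < R)
    (hl0 : 0 < l) (hl1 : l < 1)
    (α : ℝ → ℝ)
    (hα : α = fun t : ℝ => l * Real.exp (-ρ * t) + (1 - l) * Real.exp (-γ * t))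
    (Q : ℝ → ℝ)
    (hQ : Q = fun s : ℝ =>
      Real.exp (-σ ^ 2 * (T - s)) / α (T - t₀)
        + ∫ r in s..T, Real.exp (-σ ^ 2 * (r - s)) / (α (r - t₀) * R)) :
    (∀ s ∈ Set.Icc t₀ T, 0 < Q s) ∧
    (∃ P' : ℝ → ℝ, ∀ s ∈ Set.Icc t₀ T,
      HasDerivAt (fun s' : ℝ => 1 / Q s') (P' s) s ∧
      0 < 1 / Q s ∧
      P' s + σ ^ 2 * (1 / Q s) - (1 / Q s) ^ 2 / (α (s - t₀) * R) = 0) ∧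
    1 / Q T = α (T - t₀) := by
  have hαpos : ∀ t, 0 < α t := fun t => by
    have := sub_pos.2 hl1
    rw [hα]; positivity
  have hαR : ∀ t, 0 < α (t - t₀) * R := fun t => mul_pos (hαpos _) hR0
  have hh : Continuous fun r => (α (r - t₀) * R)⁻¹ := by
    refine Continuous.inv₀ ?_ fun r => (hαR r).ne'
    rw [hα]; fun_prop
  have hQ_eq : Q = backwardDuhamel (σ ^ 2) (α (T - t₀))⁻¹ T fun r => (α (r - t₀) * R)⁻¹ := by
    funext s; simp only [hQ, backwardDuhamel, div_eq_mul_inv]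
  have hQpos : ∀ s ∈ Icc t₀ T, 0 < Q s := fun s hs => by
    rw [hQ_eq]
    exact backwardDuhamel_pos (inv_pos.2 (hαpos _)) hs.2 fun r _ => (inv_pos.2 (hαR r)).le
  refine ⟨hQpos, ⟨fun s => (α (s - t₀) * R)⁻¹ * (1 / Q s) ^ 2 - σ ^ 2 * (1 / Q s),
    fun s hs => ⟨?_, one_div_pos.2 (hQpos s hs), by ring⟩⟩, ?_⟩
  · subst hQ_eq
    exact (hasDerivAt_backwardDuhamel hh s).one_div_of_linear (hQpos s hs).ne'
  · rw [hQ_eq, backwardDuhamel_self, one_div, inv_inv]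

/-- With `T > 0`, `σ ∈ ℝ`, `R ∈ (0,1]`, `t₀ ∈ [0,T)`, and the
quasi-hyperbolic discount `α(t) = λ e^{-ρt} + (1-λ) e^{-γt}`, the function
`Q(s) = e^{-σ²(T-s)}/α(T-t₀) + ∫_s^T e^{-σ²(r-s)}/(α(r-t₀) R) dr` is positive on
`[t₀,T]`, and `P = 1/Q` is differentiable, strictly positive on `[t₀,T]`, and
solves `P'(s) + σ² P(s) - P(s)²/(α(s-t₀) R) = 0` with `P(T) = α(T-t₀)`. -/
theorem single_player_precommitment_riccati
    (T σ R t₀ ρ γ l : ℝ) (hT : 0 < T) (hR0 : 0 < R) (hR1 : R ≤ 1)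
    (ht₀ : t₀ ∈ Set.Ico (0 : ℝ) T)
    (hρ : 0 < ρ) (hργ : ρ < γ) (hl0 : 0 < l) (hl1 : l < 1)
    (α : ℝ → ℝ)
    (hα : α = fun t : ℝ => l * Real.exp (-ρ * t) + (1 - l) * Real.exp (-γ * t))
    (Q : ℝ → ℝ)
    (hQ : Q = fun s : ℝ =>
      Real.exp (-σ ^ 2 * (T - s)) / α (T - t₀)
        + ∫ r in s..T, Real.exp (-σ ^ 2 * (r - s)) / (α (r - t₀) * R)) :
    (∀ s ∈ Set.Icc t₀ T, 0 < Q s) ∧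
    (∃ P' : ℝ → ℝ, ∀ s ∈ Set.Icc t₀ T,
      HasDerivAt (fun s' : ℝ => 1 / Q s') (P' s) s ∧
      0 < 1 / Q s ∧
      P' s + σ ^ 2 * (1 / Q s) - (1 / Q s) ^ 2 / (α (s - t₀) * R) = 0) ∧
    1 / Q T = α (T - t₀) :=
  single_player_precommitment_riccati_general T σ R t₀ ρ γ l hR0 hl0 hl1 α hα Q hQ
end

section
/- Fix T > 0, σ ∈ ℝ, R ∈ (0,1], and let α(t) = λ e^{-ρ t} + (1-λ) e^{-γ t} with γ > ρ > 0 and λ ∈ (0,1). Then there exists a continuously differentiable function Γ : [0,T] → ℝ satisfying the Volterra differential-integral equation Γ'(t) + σ² Γ(t) - ((1-R)/R) Γ(t)² + ∫_t^T exp(∫_t^s (σ² - 2((1-R)/R) Γ(r)) dr) · α'(s-t) · ((1-R)/R) Γ(s)² ds + exp(∫_t^T (σ² - 2((1-R)/R) Γ(r)) dr) · α'(T-t) = 0 for all t ∈ [0,T], with terminal condition Γ(T) = 1. -/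
open Real Set

/-- `Γ` (with derivative `Γ'` on `[0,T]`) is a continuously differentiable solution
of the Volterra differential-integral equation
`Γ'(t) + σ² Γ(t) - ((1-R)/R) Γ(t)²
  + ∫_t^T exp(∫_t^s (σ² - 2((1-R)/R) Γ(r)) dr) α'(s-t) ((1-R)/R) Γ(s)² ds
  + exp(∫_t^T (σ² - 2((1-R)/R) Γ(r)) dr) α'(T-t) = 0`, `Γ(T) = 1`. -/
def IsVDIESolution (T σ R : ℝ) (α Γ Γ' : ℝ → ℝ) : Prop :=
  ContinuousOn Γ' (Set.Icc 0 T) ∧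
  (∀ t ∈ Set.Icc (0 : ℝ) T, HasDerivWithinAt Γ (Γ' t) (Set.Icc (0 : ℝ) T) t) ∧
  (∀ t ∈ Set.Icc (0 : ℝ) T,
    Γ' t + σ ^ 2 * Γ t - ((1 - R) / R) * (Γ t) ^ 2
      + (∫ s in t..T,
          Real.exp (∫ r in t..s, (σ ^ 2 - 2 * ((1 - R) / R) * Γ r))
            * deriv α (s - t) * (((1 - R) / R) * (Γ s) ^ 2))
      + Real.exp (∫ r in t..T, (σ ^ 2 - 2 * ((1 - R) / R) * Γ r))
          * deriv α (T - t) = 0) ∧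
  Γ T = 1

open scoped NNReal

/-!
With `c = (1 - R) / R`, let `P` and `Q` solve the backward system
`P' = (ρ - σ² + 2 c Γ) P - c Γ²`, `Q' = (γ - σ² + 2 c Γ) Q - c Γ²`, `P(T) = Q(T) = 1`, where
`Γ = l P + (1 - l) Q`. Since `α'` is a combination of the two exponentials `e^{-ρ s}` and
`e^{-γ s}`, the function
`s ↦ exp(∫_t^s (σ² - 2 c Γ)) (l ρ e^{-ρ (s - t)} P(s) + (1 - l) γ e^{-γ (s - t)} Q(s))`
is an antiderivative of the integrand of the VDIE, and evaluating it at `s = t` and `s = T` turns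
the VDIE into the differential equations for `P` and `Q`.

The system is solved on all of `[0, T]` through the substitution `P = e^{σ² (T - t)} x`,
`Q = e^{σ² (T - t)} y`, which removes the term `-σ² P` (for `c = 0` no fixed box would contain
`P`). Because `ρ, γ, c ≥ 0`, the unit square is invariant for `(x, y)` backward in time, so the
quadratic vector field may be clamped to the square, where it is globally Lipschitz and
Picard–Lindelöf applies on the whole interval.
-/

theorem nonneg_of_hasDerivWithinAt_of_nonneg_right {f f' : ℝ → ℝ} {a b : ℝ}
    (hf : ∀ t ∈ Icc a b, HasDerivWithinAt f (f' t) (Icc a b) t) (hb : 0 ≤ f b)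
    (hf' : ∀ t ∈ Icc a b, f t ≤ 0 → f' t ≤ 0) : ∀ t ∈ Icc a b, 0 ≤ f t := by
  intro t ht
  by_contra! hft
  have hcont : ContinuousOn f (Icc a b) := fun x hx => (hf x hx).continuousWithinAt
  have htb : Icc t b ⊆ Icc a b := Icc_subset_Icc_left ht.1
  set S := Icc t b ∩ f ⁻¹' Ici 0
  have hbS : b ∈ S := ⟨⟨ht.2, le_rfl⟩, hb⟩
  have hS_bdd : BddBelow S := ⟨t, fun x hx => hx.1.1⟩
  -- `u` is the first point of `[t, b]` where `f ≥ 0`; `f` cannot increase on `[t, u]`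
  set u := sInf S
  have huS : u ∈ S := ((hcont.mono htb).preimage_isClosed_of_isClosed isClosed_Icc
    isClosed_Ici).csInf_mem ⟨b, hbS⟩ hS_bdd
  have htu : Icc t u ⊆ Icc a b := (Icc_subset_Icc_right huS.1.2).trans htb
  have hneg : ∀ x ∈ Ico t u, f x < 0 := fun x hx => not_le.1 fun h =>
    (csInf_le hS_bdd ⟨⟨hx.1, hx.2.le.trans huS.1.2⟩, h⟩).not_gt hx.2
  have hanti : AntitoneOn f (Icc t u) := by
    refine antitoneOn_of_hasDerivWithinAt_nonpos (f' := f') (convex_Icc t u) (hcont.mono htu)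
      (fun x hx => ?_) fun x hx => ?_
    all_goals rw [interior_Icc] at hx
    · exact (hf x (htu (Ioo_subset_Icc_self hx))).mono (interior_subset.trans htu)
    · exact hf' x (htu (Ioo_subset_Icc_self hx)) (hneg x (Ioo_subset_Ico_self hx)).le
  have hfu : 0 ≤ f u := huS.2
  linarith [hanti ⟨le_rfl, huS.1.1⟩ ⟨huS.1.1, le_rfl⟩ huS.1.1]

theorem exists_eq_forall_mem_Icc_hasDerivWithinAt_of_contDiff_comp {E : Type*}
    [NormedAddCommGroup E] [NormedSpace ℝ E] [CompleteSpace E] {Φ : ℝ × E → E}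
    (hΦ : ContDiff ℝ 1 Φ) {proj : E → E} {Kproj : ℝ≥0} (hproj : LipschitzWith Kproj proj)
    {S : Set E} (hS : IsCompact S) (hprojS : ∀ x, proj x ∈ S)
    {tmin tmax : ℝ} (t₀ : Icc tmin tmax) (x₀ : E) :
    ∃ u : ℝ → E, u t₀ = x₀ ∧
      ∀ t ∈ Icc tmin tmax, HasDerivWithinAt u (Φ (t, proj (u t))) (Icc tmin tmax) t := by
  have hcpt : IsCompact (Icc tmin tmax ×ˢ S) := isCompact_Icc.prod hS
  obtain ⟨K, hK⟩ := hΦ.locallyLipschitz.locallyLipschitzOn.exists_lipschitzOnWith_of_compact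
    hcpt
  obtain ⟨L, hL⟩ := hcpt.exists_bound_of_continuousOn hΦ.continuous.continuousOn
  have hmaps (t : ℝ) (ht : t ∈ Icc tmin tmax) :
      MapsTo (fun x => (t, proj x)) univ (Icc tmin tmax ×ˢ S) := fun x _ => ⟨ht, hprojS x⟩
  have hPL : IsPicardLindelof (fun t x => Φ (t, proj x)) t₀ x₀
      (L.toNNReal * (tmax - tmin).toNNReal) 0 L.toNNReal (K * Kproj) := by
    refine ⟨fun t ht => ?_, fun x _ => ?_, fun t ht x _ => ?_, ?_⟩
    · exact (hK.comp ((LipschitzWith.prodMk_left t).comp hproj).lipschitzOnWith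
        (hmaps t ht)).mono (subset_univ _) |>.weaken (by simp)
    · exact (hΦ.continuous.comp (continuous_id.prodMk continuous_const)).continuousOn
    · exact (hL _ (hmaps t ht (mem_univ x))).trans (Real.le_coe_toNNReal _)
    · have := t₀.2
      simp only [NNReal.coe_mul, Real.coe_toNNReal', NNReal.coe_zero, sub_zero]
      exact mul_le_mul_of_nonneg_left ((max_le (by linarith [this.1]) (by linarith [this.2])).trans
        (le_max_left _ _)) (le_max_right _ _)
  exact hPL.exists_eq_forall_mem_Icc_hasDerivWithinAt₀

theorem hasDerivAt_exp_integral {k : ℝ → ℝ} {a b s : ℝ} (hk : ContinuousOn k (Icc a b))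
    (hs : s ∈ Ioo a b) :
    HasDerivAt (fun x => exp (∫ r in a..x, k r)) (exp (∫ r in a..s, k r) * k s) s :=
  (intervalIntegral.integral_hasDerivAt_right
    ((hk.mono (Icc_subset_Icc_right hs.2.le)).intervalIntegrable_of_Icc hs.1.le)
    ((hk.mono Ioo_subset_Icc_self).stronglyMeasurableAtFilter isOpen_Ioo s hs)
    (hk.continuousAt (Icc_mem_nhds hs.1 hs.2))).exp

theorem continuousOn_exp_integral {k : ℝ → ℝ} {a b : ℝ} (hab : a ≤ b)
    (hk : ContinuousOn k (Icc a b)) :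
    ContinuousOn (fun x => exp (∫ r in a..x, k r)) (Icc a b) := by
  have := intervalIntegral.continuousOn_primitive_interval (μ := MeasureTheory.volume)
    (hk.integrableOn_Icc.mono_set (uIcc_subset_Icc (left_mem_Icc.2 hab) (right_mem_Icc.2 hab)))
  rw [uIcc_of_le hab] at this
  exact continuous_exp.comp_continuousOn this

theorem hasDerivAt_quasiHyperbolic (ρ γ l x : ℝ) :
    HasDerivAt (fun t => l * exp (-ρ * t) + (1 - l) * exp (-γ * t))
      (-(l * ρ * exp (-ρ * x)) - (1 - l) * γ * exp (-γ * x)) x := by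
  have hρ := ((hasDerivAt_id x).const_mul (-ρ)).exp.const_mul l
  have hγ := ((hasDerivAt_id x).const_mul (-γ)).exp.const_mul (1 - l)
  refine (hρ.add hγ).congr_deriv ?_
  simp only [id]
  ring

theorem deriv_quasiHyperbolic (ρ γ l : ℝ) :
    deriv (fun t => l * exp (-ρ * t) + (1 - l) * exp (-γ * t))
      = fun x => -(l * ρ * exp (-ρ * x)) - (1 - l) * γ * exp (-γ * x) :=
  funext fun x => (hasDerivAt_quasiHyperbolic ρ γ l x).deriv

def componentRate (σ c μ p g : ℝ) : ℝ := (μ - σ ^ 2 + 2 * c * g) * p - c * g ^ 2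

theorem hasDerivAt_exp_neg_mul_sub (μ a x : ℝ) :
    HasDerivAt (fun y => exp (-μ * (y - a))) (exp (-μ * (x - a)) * -μ) x := by
  simpa using (((hasDerivAt_id x).sub_const a).const_mul (-μ)).exp

theorem integral_exp_integral_mul_quasiHyperbolic {a b σ c ρ γ l : ℝ} (hab : a ≤ b)
    {P Q : ℝ → ℝ}
    (hP : ∀ s ∈ Icc a b, HasDerivWithinAt P
      (componentRate σ c ρ (P s) (l * P s + (1 - l) * Q s)) (Icc a b) s)
    (hQ : ∀ s ∈ Icc a b, HasDerivWithinAt Q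
      (componentRate σ c γ (Q s) (l * P s + (1 - l) * Q s)) (Icc a b) s)
    (hPb : P b = 1) (hQb : Q b = 1) :
    ∫ s in a..b, exp (∫ r in a..s, (σ ^ 2 - 2 * c * (l * P r + (1 - l) * Q r)))
        * (-(l * ρ * exp (-ρ * (s - a))) - (1 - l) * γ * exp (-γ * (s - a)))
        * (c * (l * P s + (1 - l) * Q s) ^ 2)
      = -(l * ρ * P a) - (1 - l) * γ * Q a
        + exp (∫ r in a..b, (σ ^ 2 - 2 * c * (l * P r + (1 - l) * Q r)))
          * (l * ρ * exp (-ρ * (b - a)) + (1 - l) * γ * exp (-γ * (b - a))) := by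
  have hPc : ContinuousOn P (Icc a b) := fun s hs => (hP s hs).continuousWithinAt
  have hQc : ContinuousOn Q (Icc a b) := fun s hs => (hQ s hs).continuousWithinAt
  have hh : ContinuousOn (fun r => σ ^ 2 - 2 * c * (l * P r + (1 - l) * Q r)) (Icc a b) := by
    fun_prop
  have hEc := continuousOn_exp_integral hab hh
  set E := fun x => exp (∫ r in a..x, (σ ^ 2 - 2 * c * (l * P r + (1 - l) * Q r)))
  set Ψ := fun x => E x * (l * ρ * (exp (-ρ * (x - a)) * P x)
    + (1 - l) * γ * (exp (-γ * (x - a)) * Q x))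
  have hΨ : ∀ x ∈ Ioo a b, HasDerivAt Ψ (E x
      * (-(l * ρ * exp (-ρ * (x - a))) - (1 - l) * γ * exp (-γ * (x - a)))
      * (c * (l * P x + (1 - l) * Q x) ^ 2)) x := by
    intro x hx
    have hnhds := Icc_mem_nhds hx.1 hx.2
    have hPx := (hP x (Ioo_subset_Icc_self hx)).hasDerivAt hnhds
    have hQx := (hQ x (Ioo_subset_Icc_self hx)).hasDerivAt hnhds
    refine ((hasDerivAt_exp_integral hh hx).mul
      ((((hasDerivAt_exp_neg_mul_sub ρ a x).mul hPx).const_mul (l * ρ)).add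
        (((hasDerivAt_exp_neg_mul_sub γ a x).mul hQx).const_mul ((1 - l) * γ)))).congr_deriv
      ?_
    simp only [componentRate, Pi.add_apply, Pi.mul_apply]
    ring
  have hint : IntervalIntegrable (fun x => E x
      * (-(l * ρ * exp (-ρ * (x - a))) - (1 - l) * γ * exp (-γ * (x - a)))
      * (c * (l * P x + (1 - l) * Q x) ^ 2)) MeasureTheory.volume a b := by
    apply ContinuousOn.intervalIntegrable_of_Icc hab
    fun_prop
  rw [intervalIntegral.integral_eq_sub_of_hasDerivAt_of_le hab (by fun_prop) hΨ hint]
  simp [Ψ, E, hPb, hQb]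
  ring

theorem isVDIESolution_of_components {T σ R ρ γ l c : ℝ} (hc : (1 - R) / R = c)
    {α : ℝ → ℝ} (hα : α = fun t => l * exp (-ρ * t) + (1 - l) * exp (-γ * t)) {P Q : ℝ → ℝ}
    (hP : ∀ t ∈ Icc 0 T, HasDerivWithinAt P
      (componentRate σ c ρ (P t) (l * P t + (1 - l) * Q t)) (Icc 0 T) t)
    (hQ : ∀ t ∈ Icc 0 T, HasDerivWithinAt Q
      (componentRate σ c γ (Q t) (l * P t + (1 - l) * Q t)) (Icc 0 T) t)
    (hPT : P T = 1) (hQT : Q T = 1) :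
    IsVDIESolution T σ R α (fun t => l * P t + (1 - l) * Q t)
      (fun t => l * componentRate σ c ρ (P t) (l * P t + (1 - l) * Q t)
        + (1 - l) * componentRate σ c γ (Q t) (l * P t + (1 - l) * Q t)) := by
  subst hc hα
  have hPc : ContinuousOn P (Icc 0 T) := fun t ht => (hP t ht).continuousWithinAt
  have hQc : ContinuousOn Q (Icc 0 T) := fun t ht => (hQ t ht).continuousWithinAt
  refine ⟨by simp only [componentRate]; fun_prop,
    fun t ht => ((hP t ht).const_mul l).add ((hQ t ht).const_mul (1 - l)),
    fun t ht => ?_, by simp [hPT, hQT]⟩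
  have hsub : Icc t T ⊆ Icc 0 T := Icc_subset_Icc_left ht.1
  have key := integral_exp_integral_mul_quasiHyperbolic ht.2
    (fun s hs => (hP s (hsub hs)).mono hsub) (fun s hs => (hQ s (hsub hs)).mono hsub) hPT hQT
  simp only [deriv_quasiHyperbolic, key, componentRate]
  ring

noncomputable def unitClamp (x : ℝ) : ℝ := projIcc 0 1 zero_le_one x

theorem unitClamp_mem (x : ℝ) : unitClamp x ∈ Icc 0 1 := (projIcc 0 1 zero_le_one x).2

theorem unitClamp_of_nonpos {x : ℝ} (hx : x ≤ 0) : unitClamp x = 0 :=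
  congrArg Subtype.val (projIcc_of_le_left _ hx)

theorem unitClamp_of_one_le {x : ℝ} (hx : 1 ≤ x) : unitClamp x = 1 :=
  congrArg Subtype.val (projIcc_of_right_le _ hx)

theorem unitClamp_of_mem {x : ℝ} (hx : x ∈ Icc 0 1) : unitClamp x = x :=
  congrArg Subtype.val (projIcc_of_mem _ hx)

theorem lipschitzWith_unitClamp : LipschitzWith 1 unitClamp :=
  LipschitzWith.subtype_val _ |>.comp (LipschitzWith.projIcc zero_le_one) |>.weaken (by simp)

def scaledRate (μ κ p g : ℝ) : ℝ := μ * p + κ * (g * (2 * p - g))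

theorem mem_Icc_of_hasDerivWithinAt_scaledRate {a b μ : ℝ} (hμ : 0 ≤ μ) {z κ G : ℝ → ℝ}
    (hκ : ∀ t ∈ Icc a b, 0 ≤ κ t) (hG : ∀ t ∈ Icc a b, G t ∈ Icc 0 1)
    (hz : ∀ t ∈ Icc a b,
      HasDerivWithinAt z (scaledRate μ (κ t) (unitClamp (z t)) (G t)) (Icc a b) t)
    (hzb : z b ∈ Icc 0 1) : ∀ t ∈ Icc a b, z t ∈ Icc 0 1 := by
  intro t ht
  constructor
  · refine nonneg_of_hasDerivWithinAt_of_nonneg_right hz hzb.1 (fun s hs hzs => ?_) t ht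
    rw [unitClamp_of_nonpos hzs, scaledRate]
    nlinarith [mul_nonneg (hκ s hs) (sq_nonneg (G s))]
  · refine sub_nonneg.1 <| nonneg_of_hasDerivWithinAt_of_nonneg_right
      (fun s hs => (hz s hs).const_sub 1) (sub_nonneg.2 hzb.2) (fun s hs hzs => ?_) t ht
    rw [unitClamp_of_one_le (by linarith), scaledRate]
    have := hG s hs
    nlinarith [mul_nonneg (hκ s hs) (mul_nonneg this.1 (by linarith [this.2] : 0 ≤ 2 - G s))]

theorem exists_scaled_components {T σ c ρ γ l : ℝ} (hT : 0 ≤ T) (hc : 0 ≤ c) (hρ : 0 ≤ ρ)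
    (hγ : 0 ≤ γ) (hl0 : 0 ≤ l) (hl1 : l ≤ 1) :
    ∃ x y : ℝ → ℝ, x T = 1 ∧ y T = 1 ∧ ∀ t ∈ Icc 0 T,
      HasDerivWithinAt x (scaledRate ρ (c * exp (σ ^ 2 * (T - t))) (x t)
        (l * x t + (1 - l) * y t)) (Icc 0 T) t ∧
      HasDerivWithinAt y (scaledRate γ (c * exp (σ ^ 2 * (T - t))) (y t)
        (l * x t + (1 - l) * y t)) (Icc 0 T) t := by
  set κ := fun t => c * exp (σ ^ 2 * (T - t))
  set G := fun p : ℝ × ℝ => l * p.1 + (1 - l) * p.2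
  set clamp := fun p : ℝ × ℝ => (unitClamp p.1, unitClamp p.2)
  have hGclamp (p : ℝ × ℝ) : G (clamp p) ∈ Icc 0 1 :=
    convex_Icc 0 1 (unitClamp_mem p.1) (unitClamp_mem p.2) hl0 (by linarith) (by ring)
  obtain ⟨v, hvT, hv⟩ := exists_eq_forall_mem_Icc_hasDerivWithinAt_of_contDiff_comp
    (Φ := fun z => (scaledRate ρ (κ z.1) z.2.1 (G z.2), scaledRate γ (κ z.1) z.2.2 (G z.2)))
    (by simp only [scaledRate]; fun_prop) (proj := clamp)
    ((lipschitzWith_unitClamp.comp LipschitzWith.prod_fst).prodMk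
      (lipschitzWith_unitClamp.comp LipschitzWith.prod_snd))
    (isCompact_Icc.prod isCompact_Icc) (fun p => ⟨unitClamp_mem p.1, unitClamp_mem p.2⟩)
    ⟨T, hT, le_rfl⟩ (1, 1)
  have hx t (ht : t ∈ Icc 0 T) := hasFDerivAt_fst.comp_hasDerivWithinAt t (hv t ht)
  have hy t (ht : t ∈ Icc 0 T) := hasFDerivAt_snd.comp_hasDerivWithinAt t (hv t ht)
  have hκ t (_ : t ∈ Icc 0 T) : 0 ≤ κ t := by positivity
  have hx01 := mem_Icc_of_hasDerivWithinAt_scaledRate hρ hκ (fun t _ => hGclamp (v t)) hx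
    (by simp [hvT])
  have hy01 := mem_Icc_of_hasDerivWithinAt_scaledRate hγ hκ (fun t _ => hGclamp (v t)) hy
    (by simp [hvT])
  have hclamp t (ht : t ∈ Icc 0 T) : clamp (v t) = v t :=
    Prod.ext (unitClamp_of_mem (hx01 t ht)) (unitClamp_of_mem (hy01 t ht))
  exact ⟨fun t => (v t).1, fun t => (v t).2, by simp [hvT], by simp [hvT],
    fun t ht => ⟨by have h := hx t ht; rwa [hclamp t ht] at h,
      by have h := hy t ht; rwa [hclamp t ht] at h⟩⟩

theorem hasDerivWithinAt_exp_mul_of_scaledRate {s : Set ℝ} {T σ c μ t g : ℝ} {x : ℝ → ℝ}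
    (hx : HasDerivWithinAt x (scaledRate μ (c * exp (σ ^ 2 * (T - t))) (x t) g) s t) :
    HasDerivWithinAt (fun t => exp (σ ^ 2 * (T - t)) * x t)
      (componentRate σ c μ (exp (σ ^ 2 * (T - t)) * x t) (exp (σ ^ 2 * (T - t)) * g)) s t := by
  have he :
      HasDerivAt (fun t => exp (σ ^ 2 * (T - t))) (exp (σ ^ 2 * (T - t)) * -σ ^ 2) t := by
    simpa using (((hasDerivAt_id t).const_sub T).const_mul (σ ^ 2)).exp
  refine (he.hasDerivWithinAt.mul hx).congr_deriv ?_
  simp only [scaledRate, componentRate]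
  ring

theorem exists_components {T σ c ρ γ l : ℝ} (hT : 0 ≤ T) (hc : 0 ≤ c) (hρ : 0 ≤ ρ)
    (hγ : 0 ≤ γ) (hl0 : 0 ≤ l) (hl1 : l ≤ 1) :
    ∃ P Q : ℝ → ℝ, P T = 1 ∧ Q T = 1 ∧ ∀ t ∈ Icc 0 T,
      HasDerivWithinAt P (componentRate σ c ρ (P t) (l * P t + (1 - l) * Q t)) (Icc 0 T) t ∧
      HasDerivWithinAt Q (componentRate σ c γ (Q t) (l * P t + (1 - l) * Q t)) (Icc 0 T) t := by
  obtain ⟨x, y, hxT, hyT, hxy⟩ := exists_scaled_components (σ := σ) hT hc hρ hγ hl0 hl1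
  refine ⟨fun t => exp (σ ^ 2 * (T - t)) * x t, fun t => exp (σ ^ 2 * (T - t)) * y t,
    by simp [hxT], by simp [hyT], fun t ht => ?_⟩
  have hΓ : l * (exp (σ ^ 2 * (T - t)) * x t) + (1 - l) * (exp (σ ^ 2 * (T - t)) * y t)
      = exp (σ ^ 2 * (T - t)) * (l * x t + (1 - l) * y t) := by ring
  rw [hΓ]
  exact ⟨hasDerivWithinAt_exp_mul_of_scaledRate (hxy t ht).1,
    hasDerivWithinAt_exp_mul_of_scaledRate (hxy t ht).2⟩

/-- existence of a continuously differentiable solution of the VDIE. -/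
theorem vdie_existence
    (T σ R ρ γ l : ℝ) (hT : 0 < T) (hR0 : 0 < R) (hR1 : R ≤ 1)
    (hρ : 0 < ρ) (hργ : ρ < γ) (hl0 : 0 < l) (hl1 : l < 1)
    (α : ℝ → ℝ)
    (hα : α = fun t : ℝ => l * Real.exp (-ρ * t) + (1 - l) * Real.exp (-γ * t)) :
    ∃ Γ Γ' : ℝ → ℝ, IsVDIESolution T σ R α Γ Γ' := by
  obtain ⟨P, Q, hPT, hQT, hPQ⟩ := exists_components (σ := σ) hT.le
    (div_nonneg (sub_nonneg.2 hR1) hR0.le) hρ.le (hρ.trans hργ).le hl0.le hl1.le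
  exact ⟨_, _, isVDIESolution_of_components rfl hα (fun t ht => (hPQ t ht).1)
    (fun t ht => (hPQ t ht).2) hPT hQT⟩
end

section
/- Fix T > 0, σ ∈ ℝ, R ∈ (0,1], and let α(t) = λ e^{-ρ t} + (1-λ) e^{-γ t} with γ > ρ > 0 and λ ∈ (0,1). If Γ₁, Γ₂ : [0,T] → ℝ are two continuously differentiable functions each satisfying the Volterra differential-integral equation Γ'(t) + σ² Γ(t) - ((1-R)/R) Γ(t)² + ∫_t^T exp(∫_t^s (σ² - 2((1-R)/R) Γ(r)) dr) · α'(s-t) · ((1-R)/R) Γ(s)² ds + exp(∫_t^T (σ² - 2((1-R)/R) Γ(r)) dr) · α'(T-t) = 0 for all t ∈ [0,T] with Γ(T) = 1, then Γ₁ = Γ₂ on [0,T]. -/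
/-!
Write `c = (1-R)/R`. Since `α'` is a combination of exponentials `e^{-κ s}`, the memory integral
of the equation splits into terms `I_κ(t) = ∫_t^T exp(∫_t^s (σ² - 2cΓ)) e^{-κ(s-t)} c Γ(s)² ds`,
and the last term into `E_κ(t) = exp(∫_t^T (σ² - 2cΓ)) e^{-κ(T-t)}`; each of these satisfies a
local linear ODE in `t`. So `(Γ, I_ρ, I_γ, E_ρ, E_γ)` solves an autonomous polynomial ODE with
value `(1, 0, 0, 1, 1)` at `T`, and uniqueness follows from Grönwall's inequality, a polynomial
vector field being locally Lipschitz.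
-/

open Real Set

theorem ODE_solution_unique_of_locallyLipschitz_of_mem_Icc_left
    {E : Type*} [NormedAddCommGroup E] [NormedSpace ℝ E]
    {v : E → E} {f g : ℝ → E} {a b : ℝ} (hv : LocallyLipschitz v)
    (hf : ContinuousOn f (Icc a b)) (hf' : ∀ t ∈ Ioc a b, HasDerivWithinAt f (v (f t)) (Iic t) t)
    (hg : ContinuousOn g (Icc a b)) (hg' : ∀ t ∈ Ioc a b, HasDerivWithinAt g (v (g t)) (Iic t) t)
    (hb : f b = g b) :
    EqOn f g (Icc a b) := by
  set s := f '' Icc a b ∪ g '' Icc a b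
  have hs : IsCompact s :=
    (isCompact_Icc.image_of_continuousOn hf).union (isCompact_Icc.image_of_continuousOn hg)
  obtain ⟨K, hK⟩ := hv.locallyLipschitzOn.exists_lipschitzOnWith_of_compact hs
  exact ODE_solution_unique_of_mem_Icc_left (v := fun _ => v) (s := fun _ => s)
    (fun _ _ => hK) hf hf' (fun t ht => .inl ⟨t, Ioc_subset_Icc_self ht, rfl⟩)
    hg hg' (fun t ht => .inr ⟨t, Ioc_subset_Icc_self ht, rfl⟩) hb

namespace VDIE

section Trajectory

variable {ι : Type*} (T a c : ℝ) (Γ : ℝ → ℝ)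

/-- Extends `Γ` constantly outside `[0, T]`, so that the fundamental theorem of calculus applies
on all of `ℝ`. -/
def clampIcc (t : ℝ) : ℝ := Γ (max 0 (min t T))

noncomputable def discountExponent (t : ℝ) : ℝ := ∫ r in 0..t, (a - 2 * c * clampIcc T Γ r)

/-- `∫_t^T exp(∫_t^s (a - 2cΓ)) e^{-κ(s-t)} c Γ(s)² ds`, in variation-of-constants form. -/
noncomputable def memoryTerm (κ t : ℝ) : ℝ :=
  exp (κ * t - discountExponent T a c Γ t) *
    ∫ s in t..T, exp (discountExponent T a c Γ s - κ * s) * (c * clampIcc T Γ s ^ 2)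

noncomputable def terminalTerm (κ t : ℝ) : ℝ :=
  exp (discountExponent T a c Γ T - discountExponent T a c Γ t - κ * (T - t))

noncomputable def vdieState (κ : ι → ℝ) (t : ℝ) : ℝ × (ι → ℝ) × (ι → ℝ) :=
  (clampIcc T Γ t, fun i => memoryTerm T a c Γ (κ i) t, fun i => terminalTerm T a c Γ (κ i) t)

variable {T a c Γ}

theorem clampIcc_of_mem {t : ℝ} (ht : t ∈ Icc 0 T) : clampIcc T Γ t = Γ t := by
  simp [clampIcc, min_eq_left ht.2, max_eq_right ht.1]

theorem continuous_clampIcc (hT : 0 ≤ T) (hΓ : ContinuousOn Γ (Icc 0 T)) :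
    Continuous (clampIcc T Γ) :=
  hΓ.comp_continuous (by fun_prop) fun _ => ⟨le_max_left _ _, max_le hT (min_le_right _ _)⟩

theorem hasDerivWithinAt_clampIcc_Iic {Γ' t : ℝ} (hΓ : HasDerivWithinAt Γ Γ' (Icc 0 T) t)
    (ht : t ∈ Ioc 0 T) : HasDerivWithinAt (clampIcc T Γ) Γ' (Iic t) t := by
  have hnhds : Icc 0 t ∈ nhdsWithin t (Iic t) := Icc_mem_nhdsLE ht.1
  refine ((hΓ.mono (Icc_subset_Icc_right ht.2)).mono_of_mem_nhdsWithin hnhds)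
    |>.congr_of_eventuallyEq ?_ (clampIcc_of_mem ⟨ht.1.le, ht.2⟩)
  filter_upwards [hnhds] with s hs using clampIcc_of_mem ⟨hs.1, hs.2.trans ht.2⟩

theorem hasDerivAt_discountExponent (hT : 0 ≤ T) (hΓ : ContinuousOn Γ (Icc 0 T)) (t : ℝ) :
    HasDerivAt (discountExponent T a c Γ) (a - 2 * c * clampIcc T Γ t) t :=
  (Continuous.integral_hasStrictDerivAt
    (continuous_const.sub (continuous_const.mul (continuous_clampIcc hT hΓ))) 0 t).hasDerivAt

theorem continuous_discountExponent (hT : 0 ≤ T) (hΓ : ContinuousOn Γ (Icc 0 T)) :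
    Continuous (discountExponent T a c Γ) :=
  continuous_iff_continuousAt.2 fun t => (hasDerivAt_discountExponent hT hΓ t).continuousAt

theorem integral_eq_discountExponent_sub (hT : 0 ≤ T) (hΓ : ContinuousOn Γ (Icc 0 T))
    {s t : ℝ} (hs : s ∈ Icc 0 T) (ht : t ∈ Icc 0 T) :
    ∫ r in t..s, (a - 2 * c * Γ r) = discountExponent T a c Γ s - discountExponent T a c Γ t := by
  rw [← intervalIntegral.integral_eq_sub_of_hasDerivAt
    (fun r _ => hasDerivAt_discountExponent hT hΓ r)
    ((continuous_const.sub (continuous_const.mul (continuous_clampIcc hT hΓ))).intervalIntegrable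
      _ _)]
  exact intervalIntegral.integral_congr fun r hr => by
    rw [clampIcc_of_mem (uIcc_subset_Icc ht hs hr)]

theorem hasDerivAt_memoryTerm (hT : 0 ≤ T) (hΓ : ContinuousOn Γ (Icc 0 T)) (κ t : ℝ) :
    HasDerivAt (memoryTerm T a c Γ κ)
      ((κ - a + 2 * c * clampIcc T Γ t) * memoryTerm T a c Γ κ t - c * clampIcc T Γ t ^ 2) t := by
  have hD := continuous_discountExponent (a := a) (c := c) hT hΓ
  have hcl := continuous_clampIcc hT hΓ
  set g : ℝ → ℝ := fun s => exp (discountExponent T a c Γ s - κ * s) * (c * clampIcc T Γ s ^ 2)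
  have hint : HasDerivAt (fun t => ∫ s in t..T, g s) (-g t) t :=
    have hg : Continuous g := by fun_prop
    intervalIntegral.integral_hasDerivAt_left (hg.intervalIntegrable _ _)
      (hg.stronglyMeasurableAtFilter _ _) hg.continuousAt
  have hexp := (((hasDerivAt_id' t).const_mul κ).fun_sub
    (hasDerivAt_discountExponent (a := a) (c := c) hT hΓ t)).exp
  refine (hexp.mul hint).congr_deriv ?_
  have hcancel : exp (κ * t - discountExponent T a c Γ t) * g t = c * clampIcc T Γ t ^ 2 := by
    rw [← mul_assoc, ← exp_add, sub_add_sub_cancel, sub_self, exp_zero, one_mul]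
  unfold memoryTerm
  rw [mul_neg, hcancel]
  ring

theorem hasDerivAt_terminalTerm (hT : 0 ≤ T) (hΓ : ContinuousOn Γ (Icc 0 T)) (κ t : ℝ) :
    HasDerivAt (terminalTerm T a c Γ κ)
      ((κ - a + 2 * c * clampIcc T Γ t) * terminalTerm T a c Γ κ t) t := by
  have h := (((hasDerivAt_discountExponent (a := a) (c := c) hT hΓ t).const_sub
    (discountExponent T a c Γ T)).fun_sub (((hasDerivAt_id' t).const_sub T).const_mul κ)).exp
  exact h.congr_deriv (by unfold terminalTerm; ring)

theorem continuous_vdieState (hT : 0 ≤ T) (hΓ : ContinuousOn Γ (Icc 0 T)) (κ : ι → ℝ) :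
    Continuous (vdieState T a c Γ κ) :=
  (continuous_clampIcc hT hΓ).prodMk <|
    (continuous_pi fun i => continuous_iff_continuousAt.2 fun t =>
      (hasDerivAt_memoryTerm hT hΓ (κ i) t).continuousAt).prodMk
    (continuous_pi fun i => continuous_iff_continuousAt.2 fun t =>
      (hasDerivAt_terminalTerm hT hΓ (κ i) t).continuousAt)

theorem vdieState_self (hT : 0 ≤ T) (κ : ι → ℝ) : vdieState T a c Γ κ T = (Γ T, 0, 1) := by
  refine Prod.ext (clampIcc_of_mem ⟨hT, le_rfl⟩) (Prod.ext ?_ ?_)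
  · funext; simp [vdieState, memoryTerm]
  · funext; simp [vdieState, terminalTerm]

end Trajectory

section ExpKernel

variable {ι : Type*} [Fintype ι]

noncomputable def expSum (w κ : ι → ℝ) (t : ℝ) : ℝ := ∑ i, w i * exp (-κ i * t)

theorem hasDerivAt_expSum (w κ : ι → ℝ) (t : ℝ) :
    HasDerivAt (expSum w κ) (-∑ i, w i * κ i * exp (-κ i * t)) t := by
  refine (HasDerivAt.fun_sum (u := Finset.univ) fun i _ =>
    (((hasDerivAt_id' t).const_mul (-κ i)).exp).const_mul (w i)).congr_deriv ?_
  rw [← Finset.sum_neg_distrib]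
  exact Finset.sum_congr rfl fun i _ => by ring

def vdieField (a c : ℝ) (w κ : ι → ℝ) (x : ℝ × (ι → ℝ) × (ι → ℝ)) : ℝ × (ι → ℝ) × (ι → ℝ) :=
  (-a * x.1 + c * x.1 ^ 2 + ∑ i, w i * κ i * (x.2.1 i + x.2.2 i),
   fun i => (κ i - a + 2 * c * x.1) * x.2.1 i - c * x.1 ^ 2,
   fun i => (κ i - a + 2 * c * x.1) * x.2.2 i)

theorem contDiff_vdieField (a c : ℝ) (w κ : ι → ℝ) : ContDiff ℝ 1 (vdieField a c w κ) := by
  unfold vdieField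
  fun_prop

variable {T a c : ℝ} {Γ : ℝ → ℝ}

theorem integral_mul_deriv_expSum_eq (hT : 0 ≤ T) (hΓ : ContinuousOn Γ (Icc 0 T))
    (w κ : ι → ℝ) {t : ℝ} (ht : t ∈ Icc 0 T) :
    ∫ s in t..T, exp (∫ r in t..s, (a - 2 * c * Γ r)) * deriv (expSum w κ) (s - t) * (c * Γ s ^ 2)
      = -∑ i, w i * κ i * memoryTerm T a c Γ (κ i) t := by
  set D := discountExponent T a c Γ with hD_def
  have hD : Continuous D := continuous_discountExponent hT hΓ
  have hcl := continuous_clampIcc hT hΓ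
  have hexp : ∀ k s, exp (D s - D t) * exp (-k * (s - t)) = exp (k * t - D t) * exp (D s - k * s) :=
    fun k s => by rw [← exp_add, ← exp_add]; congr 1; ring
  calc _ = ∫ s in t..T, ∑ i, -(w i * κ i) * exp (κ i * t - D t) *
          (exp (D s - κ i * s) * (c * clampIcc T Γ s ^ 2)) :=
        intervalIntegral.integral_congr fun s hs => by
          have hs' := uIcc_subset_Icc ht ⟨hT, le_rfl⟩ hs
          rw [integral_eq_discountExponent_sub hT hΓ hs' ht, (hasDerivAt_expSum w κ _).deriv,
            ← clampIcc_of_mem (Γ := Γ) hs', mul_neg, neg_mul, Finset.mul_sum, Finset.sum_mul,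
            ← Finset.sum_neg_distrib]
          refine Finset.sum_congr rfl fun i _ => ?_
          linear_combination (-(w i * κ i) * (c * clampIcc T Γ s ^ 2)) * hexp (κ i) s
    _ = _ := by
      rw [intervalIntegral.integral_finsetSum fun i _ => by
        exact (by fun_prop : Continuous _).intervalIntegrable _ _, ← Finset.sum_neg_distrib]
      refine Finset.sum_congr rfl fun i _ => ?_
      rw [intervalIntegral.integral_const_mul, memoryTerm, ← hD_def]
      ring

theorem exp_integral_mul_deriv_expSum_eq (hT : 0 ≤ T) (hΓ : ContinuousOn Γ (Icc 0 T))
    (w κ : ι → ℝ) {t : ℝ} (ht : t ∈ Icc 0 T) :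
    exp (∫ r in t..T, (a - 2 * c * Γ r)) * deriv (expSum w κ) (T - t)
      = -∑ i, w i * κ i * terminalTerm T a c Γ (κ i) t := by
  rw [integral_eq_discountExponent_sub hT hΓ ⟨hT, le_rfl⟩ ht, (hasDerivAt_expSum w κ _).deriv,
    mul_neg, Finset.mul_sum]
  refine congrArg Neg.neg (Finset.sum_congr rfl fun i _ => ?_)
  rw [terminalTerm, sub_eq_add_neg (_ - _), exp_add, neg_mul]
  ring

end ExpKernel

end VDIE

open VDIE

namespace IsVDIESolution

variable {ι : Type*} [Fintype ι] {T σ R : ℝ} {α Γ Γ' : ℝ → ℝ}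

theorem continuousOn (h : IsVDIESolution T σ R α Γ Γ') :
    ContinuousOn Γ (Icc 0 T) :=
  fun t ht => (h.2.1 t ht).continuousWithinAt

theorem deriv_eq {w κ : ι → ℝ} (hT : 0 ≤ T)
    (h : IsVDIESolution T σ R (expSum w κ) Γ Γ') {t : ℝ} (ht : t ∈ Icc 0 T) :
    Γ' t = (vdieField (σ ^ 2) ((1 - R) / R) w κ (vdieState T (σ ^ 2) ((1 - R) / R) Γ κ t)).1 := by
  have heq := h.2.2.1 t ht
  rw [integral_mul_deriv_expSum_eq hT h.continuousOn w κ ht,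
    exp_integral_mul_deriv_expSum_eq hT h.continuousOn w κ ht] at heq
  simp only [vdieField, vdieState, clampIcc_of_mem ht, mul_add, Finset.sum_add_distrib]
  linarith

theorem hasDerivWithinAt_vdieState {w κ : ι → ℝ} (hT : 0 ≤ T)
    (h : IsVDIESolution T σ R (expSum w κ) Γ Γ') {t : ℝ} (ht : t ∈ Ioc 0 T) :
    HasDerivWithinAt (vdieState T (σ ^ 2) ((1 - R) / R) Γ κ)
      (vdieField (σ ^ 2) ((1 - R) / R) w κ (vdieState T (σ ^ 2) ((1 - R) / R) Γ κ t))
      (Iic t) t := by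
  have hΓ := h.continuousOn
  refine ((hasDerivWithinAt_clampIcc_Iic (h.2.1 t (Ioc_subset_Icc_self ht)) ht).prodMk
    ((hasDerivAt_pi.2 fun i => hasDerivAt_memoryTerm hT hΓ (κ i) t).prodMk
      (hasDerivAt_pi.2 fun i => hasDerivAt_terminalTerm hT hΓ (κ i) t)).hasDerivWithinAt)
    |>.congr_deriv ?_
  rw [h.deriv_eq hT (Ioc_subset_Icc_self ht)]
  rfl

theorem eqOn {w κ : ι → ℝ} {Γ₁ Γ₁' Γ₂ Γ₂' : ℝ → ℝ} (hT : 0 ≤ T)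
    (h₁ : IsVDIESolution T σ R (expSum w κ) Γ₁ Γ₁')
    (h₂ : IsVDIESolution T σ R (expSum w κ) Γ₂ Γ₂') : EqOn Γ₁ Γ₂ (Icc 0 T) := by
  have hstate := ODE_solution_unique_of_locallyLipschitz_of_mem_Icc_left
    (contDiff_vdieField (σ ^ 2) ((1 - R) / R) w κ).locallyLipschitz
    (continuous_vdieState hT h₁.continuousOn κ).continuousOn
    (fun _ ht => h₁.hasDerivWithinAt_vdieState hT ht)
    (continuous_vdieState hT h₂.continuousOn κ).continuousOn
    (fun _ ht => h₂.hasDerivWithinAt_vdieState hT ht)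
    (by rw [vdieState_self hT, vdieState_self hT, h₁.2.2.2, h₂.2.2.2])
  intro t ht
  simpa [vdieState, clampIcc_of_mem ht] using congrArg Prod.fst (hstate ht)

end IsVDIESolution

theorem vdie_uniqueness_general
    (T σ R ρ γ l : ℝ) (hT : 0 < T)
    (α : ℝ → ℝ)
    (hα : α = fun t : ℝ => l * Real.exp (-ρ * t) + (1 - l) * Real.exp (-γ * t))
    (Γ₁ Γ₁' Γ₂ Γ₂' : ℝ → ℝ)
    (h₁ : IsVDIESolution T σ R α Γ₁ Γ₁')
    (h₂ : IsVDIESolution T σ R α Γ₂ Γ₂') :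
    Set.EqOn Γ₁ Γ₂ (Set.Icc (0 : ℝ) T) := by
  have hα' : α = expSum ![l, 1 - l] ![ρ, γ] := by
    rw [hα]
    ext t
    simp [expSum, Fin.sum_univ_two]
  subst hα'
  exact h₁.eqOn hT.le h₂

/-- uniqueness of the continuously differentiable solution of the VDIE. -/
theorem vdie_uniqueness
    (T σ R ρ γ l : ℝ) (hT : 0 < T) (hR0 : 0 < R) (hR1 : R ≤ 1)
    (hρ : 0 < ρ) (hργ : ρ < γ) (hl0 : 0 < l) (hl1 : l < 1)
    (α : ℝ → ℝ)
    (hα : α = fun t : ℝ => l * Real.exp (-ρ * t) + (1 - l) * Real.exp (-γ * t))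
    (Γ₁ Γ₁' Γ₂ Γ₂' : ℝ → ℝ)
    (h₁ : IsVDIESolution T σ R α Γ₁ Γ₁')
    (h₂ : IsVDIESolution T σ R α Γ₂ Γ₂') :
    Set.EqOn Γ₁ Γ₂ (Set.Icc (0 : ℝ) T) :=
  vdie_uniqueness_general T σ R ρ γ l hT α hα Γ₁ Γ₁' Γ₂ Γ₂' h₁ h₂
end

section
/- Fix T > 0, σ ∈ ℝ, R ∈ (0,1], and let α(t) = λ e^{-ρ t} + (1-λ) e^{-γ t} with γ > ρ > 0 and λ ∈ (0,1). If Γ : [0,T] → ℝ is a continuously differentiable function satisfying the Volterra differential-integral equation Γ'(t) + σ² Γ(t) - ((1-R)/R) Γ(t)² + ∫_t^T exp(∫_t^s (σ² - 2((1-R)/R) Γ(r)) dr) · α'(s-t) · ((1-R)/R) Γ(s)² ds + exp(∫_t^T (σ² - 2((1-R)/R) Γ(r)) dr) · α'(T-t) = 0 for all t ∈ [0,T] with Γ(T) = 1, then 0 ≤ Γ(t) ≤ e^{σ²(T-t)} for all t ∈ [0,T]. -/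
/-!
Since `α' < 0`, both memory terms of the equation are nonpositive, so
`Γ' + σ² Γ ≥ ((1-R)/R) Γ² ≥ 0`; hence `s ↦ e^{σ² s} Γ(s)` is nondecreasing and
`Γ(t) ≤ e^{σ²(T-t)} Γ(T) = e^{σ²(T-t)}`.

For the lower bound let `A(t) = ∫_t^T (σ² - 2((1-R)/R) Γ)` and
`κ(s) = e^{-A(s)} ((1-R)/R) Γ(s)² ≥ 0`. Multiplying the equation by `e^{-A(t)}` turns it into
`(Γ e^{-A})'(t) = -κ(t) - ∫_t^T α'(s-t) κ(s) ds - α'(T-t)`.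
Because `α` is a mixture of exponentials with `α(0) = 1`, the right-hand side is also the derivative
of `α(T-t) + ∫_t^T α(s-t) κ(s) ds`; both functions equal `1` at `T`, so
`Γ(t) e^{-A(t)} = α(T-t) + ∫_t^T α(s-t) κ(s) ds ≥ 0`.
-/

open Real Set

open intervalIntegral

theorem le_exp_mul_sub_mul_of_hasDerivWithinAt {f f' : ℝ → ℝ} {a b c x : ℝ}
    (hf : ∀ y ∈ Icc a b, HasDerivWithinAt f (f' y) (Icc a b) y)
    (hf' : ∀ y ∈ Ioo a b, 0 ≤ f' y + c * f y) (hx : x ∈ Icc a b) :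
    f x ≤ exp (c * (b - x)) * f b := by
  have hg : ∀ y ∈ Icc a b, HasDerivWithinAt (fun s => exp (c * s) * f s)
      (exp (c * y) * (f' y + c * f y)) (Icc a b) y := fun y hy =>
    ((((hasDerivAt_id y).const_mul c).exp.hasDerivWithinAt).mul (hf y hy)).congr_deriv
      (by simp only [id, mul_one]; ring)
  have hmono : MonotoneOn (fun s => exp (c * s) * f s) (Icc a b) :=
    monotoneOn_of_hasDerivWithinAt_nonneg (convex_Icc a b)
      (fun y hy => (hg y hy).continuousWithinAt)
      (fun y hy => (hg y (interior_subset hy)).mono interior_subset)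
      (fun y hy => mul_nonneg (exp_pos _).le (hf' y (by rwa [interior_Icc] at hy)))
  have hle := hmono hx (right_mem_Icc.2 (hx.1.trans hx.2)) hx.2
  calc f x = exp (-(c * x)) * (exp (c * x) * f x) := by
        rw [← mul_assoc, ← exp_add, neg_add_cancel, exp_zero, one_mul]
    _ ≤ exp (-(c * x)) * (exp (c * b) * f b) := mul_le_mul_of_nonneg_left hle (exp_pos _).le
    _ = exp (c * (b - x)) * f b := by rw [← mul_assoc, ← exp_add]; ring_nf

theorem eq_right_of_hasDerivWithinAt_zero {f : ℝ → ℝ} {a b x : ℝ}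
    (hf : ∀ y ∈ Icc a b, HasDerivWithinAt f 0 (Icc a b) y) (hx : x ∈ Icc a b) :
    f x = f b := by
  have hsub : Icc x b ⊆ Icc a b := Icc_subset_Icc_left hx.1
  have hint := integral_eq_sub_of_hasDerivAt_of_le hx.2
    (fun y hy => (hf y (hsub hy)).continuousWithinAt.mono hsub)
    (fun y hy => (hf y (hsub (Ioo_subset_Icc_self hy))).hasDerivAt
      (Icc_mem_nhds (hx.1.trans_lt hy.1) hy.2)) intervalIntegrable_const
  rw [integral_zero] at hint
  linarith

theorem ContinuousOn.exists_continuous_eqOn_Icc {f : ℝ → ℝ} {a b : ℝ} (hab : a ≤ b)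
    (hf : ContinuousOn f (Icc a b)) : ∃ g : ℝ → ℝ, Continuous g ∧ EqOn g f (Icc a b) :=
  ⟨IccExtend hab ((Icc a b).domRestrict f), hf.domRestrict.Icc_extend',
    fun _ hx => IccExtend_of_mem hab _ hx⟩

theorem hasDerivAt_integral_exp_mul_sub_mul {κ : ℝ → ℝ} (hκ : Continuous κ) (c b t : ℝ) :
    HasDerivAt (fun t => ∫ s in t..b, exp (c * (s - t)) * κ s)
      (-κ t - c * ∫ s in t..b, exp (c * (s - t)) * κ s) t := by
  have hfactor : ∀ t, ∫ s in t..b, exp (c * (s - t)) * κ s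
      = exp (-(c * t)) * ∫ s in t..b, exp (c * s) * κ s := by
    intro t
    rw [← integral_const_mul]
    refine integral_congr fun s _ => ?_
    simp only [← mul_assoc, ← exp_add]
    ring_nf
  have hcont : Continuous fun s => exp (c * s) * κ s := by fun_prop
  have hftc := integral_hasDerivAt_left (hcont.intervalIntegrable t b)
    (hcont.stronglyMeasurableAtFilter _ _) hcont.continuousAt
  have hexp : HasDerivAt (fun t => exp (-(c * t))) (exp (-(c * t)) * -c) t := by
    simpa using ((hasDerivAt_id t).const_mul c).neg.exp
  simp only [hfactor]
  refine (hexp.mul hftc).congr_deriv ?_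
  have hinv : exp (-(c * t)) * exp (c * t) = 1 := by rw [← exp_add, neg_add_cancel, exp_zero]
  linear_combination (-κ t) * hinv

noncomputable def qhDiscount (l ρ γ t : ℝ) : ℝ := l * exp (-ρ * t) + (1 - l) * exp (-γ * t)

theorem qhDiscount_zero (l ρ γ : ℝ) : qhDiscount l ρ γ 0 = 1 := by
  simp [qhDiscount]

theorem qhDiscount_nonneg {l : ℝ} (hl0 : 0 ≤ l) (hl1 : l ≤ 1) (ρ γ t : ℝ) :
    0 ≤ qhDiscount l ρ γ t :=
  add_nonneg (mul_nonneg hl0 (exp_pos _).le) (mul_nonneg (sub_nonneg.2 hl1) (exp_pos _).le)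

theorem hasDerivAt_qhDiscount (l ρ γ t : ℝ) :
    HasDerivAt (qhDiscount l ρ γ)
      (l * (-ρ * exp (-ρ * t)) + (1 - l) * (-γ * exp (-γ * t))) t := by
  have hexp : ∀ c : ℝ, HasDerivAt (fun t => exp (c * t)) (c * exp (c * t)) t := fun c => by
    simpa [mul_comm] using ((hasDerivAt_id t).const_mul c).exp
  exact ((hexp (-ρ)).const_mul l).add ((hexp (-γ)).const_mul (1 - l))

theorem deriv_qhDiscount_nonpos {l ρ γ : ℝ} (hl0 : 0 ≤ l) (hl1 : l ≤ 1) (hρ : 0 ≤ ρ)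
    (hγ : 0 ≤ γ) (t : ℝ) : deriv (qhDiscount l ρ γ) t ≤ 0 := by
  rw [(hasDerivAt_qhDiscount l ρ γ t).deriv]
  have h₁ : 0 ≤ l * (ρ * exp (-ρ * t)) := by positivity
  have h₂ : 0 ≤ (1 - l) * (γ * exp (-γ * t)) := mul_nonneg (sub_nonneg.2 hl1) (by positivity)
  linarith

theorem hasDerivAt_integral_qhDiscount_mul {κ : ℝ → ℝ} (hκ : Continuous κ) (l ρ γ b t : ℝ) :
    HasDerivAt (fun t => ∫ s in t..b, qhDiscount l ρ γ (s - t) * κ s)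
      (-κ t - ∫ s in t..b, deriv (qhDiscount l ρ γ) (s - t) * κ s) t := by
  set E : ℝ → ℝ → ℝ := fun c t => ∫ s in t..b, exp (c * (s - t)) * κ s with hE
  have hsplit : ∀ a₁ a₂ c₁ c₂ t : ℝ,
      ∫ s in t..b, (a₁ * exp (c₁ * (s - t)) + a₂ * exp (c₂ * (s - t))) * κ s
        = a₁ * E c₁ t + a₂ * E c₂ t := by
    intro a₁ a₂ c₁ c₂ t
    simp only [hE, add_mul, mul_assoc]
    rw [integral_add, integral_const_mul, integral_const_mul] <;>
      exact (by fun_prop : Continuous _).intervalIntegrable _ _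
  have hK : ∀ t, ∫ s in t..b, qhDiscount l ρ γ (s - t) * κ s
      = l * E (-ρ) t + (1 - l) * E (-γ) t :=
    hsplit l (1 - l) (-ρ) (-γ)
  have hK' : ∫ s in t..b, deriv (qhDiscount l ρ γ) (s - t) * κ s
      = l * (-ρ) * E (-ρ) t + (1 - l) * (-γ) * E (-γ) t := by
    rw [← hsplit]
    refine integral_congr fun s _ => ?_
    simp only [(hasDerivAt_qhDiscount l ρ γ _).deriv]
    ring
  rw [hK', funext hK]
  refine (((hasDerivAt_integral_exp_mul_sub_mul hκ (-ρ) b t).const_mul l).add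
    ((hasDerivAt_integral_exp_mul_sub_mul hκ (-γ) b t).const_mul (1 - l))).congr_deriv ?_
  ring

-- `A` and `κ` of the header; they are applied to a continuous extension `G` of `Γ` beyond `[0, T]`,
-- which makes them differentiable on all of `ℝ`.
noncomputable def vdieExponent (T σ R : ℝ) (Γ : ℝ → ℝ) (t : ℝ) : ℝ :=
  ∫ r in t..T, (σ ^ 2 - 2 * ((1 - R) / R) * Γ r)

noncomputable def vdieSource (T σ R : ℝ) (Γ : ℝ → ℝ) (s : ℝ) : ℝ :=
  exp (-vdieExponent T σ R Γ s) * ((1 - R) / R * Γ s ^ 2)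

section VDIEExponent

variable {T σ R : ℝ} {Γ G : ℝ → ℝ}

@[simp]
theorem vdieExponent_self : vdieExponent T σ R G T = 0 :=
  integral_same

theorem hasDerivAt_vdieExponent (hG : Continuous G) (t : ℝ) :
    HasDerivAt (vdieExponent T σ R G) (-(σ ^ 2 - 2 * ((1 - R) / R) * G t)) t := by
  have hp : Continuous fun r => σ ^ 2 - 2 * ((1 - R) / R) * G r := by fun_prop
  exact integral_hasDerivAt_left (hp.intervalIntegrable t T)
    (hp.stronglyMeasurableAtFilter _ _) hp.continuousAt

theorem continuous_vdieExponent (hG : Continuous G) : Continuous (vdieExponent T σ R G) :=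
  continuous_iff_continuousAt.2 fun t => (hasDerivAt_vdieExponent hG t).continuousAt

theorem continuous_vdieSource (hG : Continuous G) : Continuous (vdieSource T σ R G) := by
  have := continuous_vdieExponent (T := T) (σ := σ) (R := R) hG
  unfold vdieSource
  fun_prop

theorem vdieSource_nonneg (hq : 0 ≤ (1 - R) / R) (s : ℝ) : 0 ≤ vdieSource T σ R G s :=
  mul_nonneg (exp_pos _).le (mul_nonneg hq (sq_nonneg _))

theorem integral_eq_vdieExponent_sub (hG : Continuous G) (hGΓ : EqOn G Γ (Icc 0 T)) {t s : ℝ}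
    (ht : t ∈ Icc 0 T) (hs : s ∈ Icc 0 T) :
    ∫ r in t..s, (σ ^ 2 - 2 * ((1 - R) / R) * Γ r)
      = vdieExponent T σ R G t - vdieExponent T σ R G s := by
  have hp : Continuous fun r => σ ^ 2 - 2 * ((1 - R) / R) * G r := by fun_prop
  have hsub : uIcc t s ⊆ Icc 0 T := (ordConnected_Icc).uIcc_subset ht hs
  rw [eq_sub_iff_add_eq, vdieExponent, vdieExponent,
    ← integral_add_adjacent_intervals (hp.intervalIntegrable t s) (hp.intervalIntegrable s T)]
  congr 1
  exact integral_congr fun r hr => by rw [hGΓ (hsub hr)]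

end VDIEExponent

namespace IsVDIESolution

variable {T σ R l ρ γ : ℝ} {α Γ Γ' G : ℝ → ℝ}

theorem deriv_add_mul_nonneg (h : IsVDIESolution T σ R α Γ Γ') (hq : 0 ≤ (1 - R) / R)
    (hα : ∀ u, 0 ≤ u → deriv α u ≤ 0) {t : ℝ} (ht : t ∈ Icc 0 T) :
    0 ≤ Γ' t + σ ^ 2 * Γ t := by
  have heq := h.2.2.1 t ht
  have hmemory : 0 ≤ -∫ s in t..T,
      exp (∫ r in t..s, (σ ^ 2 - 2 * ((1 - R) / R) * Γ r))
        * deriv α (s - t) * ((1 - R) / R * Γ s ^ 2) := by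
    rw [← integral_neg]
    refine integral_nonneg ht.2 fun s hs => neg_nonneg.2 <|
      mul_nonpos_of_nonpos_of_nonneg ?_ (mul_nonneg hq (sq_nonneg _))
    exact mul_nonpos_of_nonneg_of_nonpos (exp_pos _).le (hα _ (sub_nonneg.2 hs.1))
  have hterminal : exp (∫ r in t..T, (σ ^ 2 - 2 * ((1 - R) / R) * Γ r)) * deriv α (T - t) ≤ 0 :=
    mul_nonpos_of_nonneg_of_nonpos (exp_pos _).le (hα _ (sub_nonneg.2 ht.2))
  nlinarith [mul_nonneg hq (sq_nonneg (Γ t))]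

theorem le_exp (h : IsVDIESolution T σ R α Γ Γ') (hq : 0 ≤ (1 - R) / R)
    (hα : ∀ u, 0 ≤ u → deriv α u ≤ 0) {t : ℝ} (ht : t ∈ Icc 0 T) :
    Γ t ≤ exp (σ ^ 2 * (T - t)) := by
  simpa [h.2.2.2] using le_exp_mul_sub_mul_of_hasDerivWithinAt h.2.1
    (fun s hs => h.deriv_add_mul_nonneg hq hα (Ioo_subset_Icc_self hs)) ht

theorem hasDerivWithinAt_mul_exp_neg_vdieExponent (h : IsVDIESolution T σ R α Γ Γ')
    (hG : Continuous G) (hGΓ : EqOn G Γ (Icc 0 T)) {t : ℝ} (ht : t ∈ Icc 0 T) :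
    HasDerivWithinAt (fun s => Γ s * exp (-vdieExponent T σ R G s))
      (-vdieSource T σ R G t - (∫ s in t..T, deriv α (s - t) * vdieSource T σ R G s)
        - deriv α (T - t)) (Icc 0 T) t := by
  set A := vdieExponent T σ R G
  have hT : T ∈ Icc 0 T := ⟨ht.1.trans ht.2, le_rfl⟩
  have hmemory : ∫ s in t..T, exp (∫ r in t..s, (σ ^ 2 - 2 * ((1 - R) / R) * Γ r))
        * deriv α (s - t) * ((1 - R) / R * Γ s ^ 2)
      = exp (A t) * ∫ s in t..T, deriv α (s - t) * vdieSource T σ R G s := by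
    rw [← integral_const_mul]
    refine integral_congr fun s hs => ?_
    have hs' : s ∈ Icc 0 T := (ordConnected_Icc).uIcc_subset ht hT hs
    rw [integral_eq_vdieExponent_sub hG hGΓ ht hs', vdieSource, hGΓ hs', sub_eq_add_neg, exp_add]
    ring
  have hterminal : exp (∫ r in t..T, (σ ^ 2 - 2 * ((1 - R) / R) * Γ r)) = exp (A t) := by
    rw [integral_eq_vdieExponent_sub hG hGΓ ht hT, vdieExponent_self, sub_zero]
  have heq := h.2.2.1 t ht
  rw [hmemory, hterminal] at heq
  have hinv : exp (-A t) * exp (A t) = 1 := by rw [← exp_add, neg_add_cancel, exp_zero]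
  refine ((h.2.1 t ht).mul (hasDerivAt_vdieExponent hG t).neg.exp.hasDerivWithinAt).congr_deriv ?_
  rw [vdieSource, hGΓ ht]
  linear_combination exp (-A t) * heq
    - ((∫ s in t..T, deriv α (s - t) * vdieSource T σ R G s) + deriv α (T - t)) * hinv

theorem mul_exp_neg_vdieExponent_eq (h : IsVDIESolution T σ R (qhDiscount l ρ γ) Γ Γ')
    (hG : Continuous G) (hGΓ : EqOn G Γ (Icc 0 T)) {t : ℝ} (ht : t ∈ Icc 0 T) :
    Γ t * exp (-vdieExponent T σ R G t) =
      qhDiscount l ρ γ (T - t) + ∫ s in t..T, qhDiscount l ρ γ (s - t) * vdieSource T σ R G s := by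
  have hκ : Continuous (vdieSource T σ R G) := continuous_vdieSource hG
  rw [← sub_eq_zero]
  refine (eq_right_of_hasDerivWithinAt_zero (f := fun x => Γ x * exp (-vdieExponent T σ R G x)
    - (qhDiscount l ρ γ (T - x) + ∫ s in x..T, qhDiscount l ρ γ (s - x) * vdieSource T σ R G s))
    (fun x hx => ?_) ht).trans ?_
  · refine ((h.hasDerivWithinAt_mul_exp_neg_vdieExponent hG hGΓ hx).sub
      (((hasDerivAt_qhDiscount l ρ γ (T - x)).comp_const_sub T x).add
        (hasDerivAt_integral_qhDiscount_mul hκ l ρ γ T x)).hasDerivWithinAt).congr_deriv ?_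
    rw [(hasDerivAt_qhDiscount l ρ γ (T - x)).deriv]
    ring
  · simp [h.2.2.2, qhDiscount_zero]

theorem nonneg (h : IsVDIESolution T σ R (qhDiscount l ρ γ) Γ Γ') (hq : 0 ≤ (1 - R) / R)
    (hl0 : 0 ≤ l) (hl1 : l ≤ 1) {t : ℝ} (ht : t ∈ Icc 0 T) : 0 ≤ Γ t := by
  obtain ⟨G, hG, hGΓ⟩ := ContinuousOn.exists_continuous_eqOn_Icc (ht.1.trans ht.2)
    fun s hs => (h.2.1 s hs).continuousWithinAt
  refine nonneg_of_mul_nonneg_left ?_ (exp_pos (-vdieExponent T σ R G t))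
  rw [h.mul_exp_neg_vdieExponent_eq hG hGΓ ht]
  exact add_nonneg (qhDiscount_nonneg hl0 hl1 _ _ _) <| integral_nonneg ht.2 fun s _ =>
    mul_nonneg (qhDiscount_nonneg hl0 hl1 _ _ _) (vdieSource_nonneg hq s)

end IsVDIESolution

theorem vdie_apriori_bound_general
    (T σ R ρ γ l : ℝ) (hR0 : 0 < R) (hR1 : R ≤ 1)
    (hρ : 0 < ρ) (hργ : ρ < γ) (hl0 : 0 < l) (hl1 : l < 1)
    (α : ℝ → ℝ)
    (hα : α = fun t : ℝ => l * Real.exp (-ρ * t) + (1 - l) * Real.exp (-γ * t))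
    (Γ Γ' : ℝ → ℝ)
    (h : IsVDIESolution T σ R α Γ Γ') :
    ∀ t ∈ Set.Icc (0 : ℝ) T, 0 ≤ Γ t ∧ Γ t ≤ Real.exp (σ ^ 2 * (T - t)) := by
  obtain rfl : α = qhDiscount l ρ γ := hα
  have hq : 0 ≤ (1 - R) / R := div_nonneg (sub_nonneg.2 hR1) hR0.le
  have hα' : ∀ u, 0 ≤ u → deriv (qhDiscount l ρ γ) u ≤ 0 := fun u _ =>
    deriv_qhDiscount_nonpos hl0.le hl1.le hρ.le (hρ.trans hργ).le u
  exact fun t ht => ⟨h.nonneg hq hl0.le hl1.le ht, h.le_exp hq hα' ht⟩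

/-- a priori bound `0 ≤ Γ(t) ≤ e^{σ²(T-t)}` for any continuously
differentiable solution of the VDIE. -/
theorem vdie_apriori_bound
    (T σ R ρ γ l : ℝ) (hT : 0 < T) (hR0 : 0 < R) (hR1 : R ≤ 1)
    (hρ : 0 < ρ) (hργ : ρ < γ) (hl0 : 0 < l) (hl1 : l < 1)
    (α : ℝ → ℝ)
    (hα : α = fun t : ℝ => l * Real.exp (-ρ * t) + (1 - l) * Real.exp (-γ * t))
    (Γ Γ' : ℝ → ℝ)
    (h : IsVDIESolution T σ R α Γ Γ') :
    ∀ t ∈ Set.Icc (0 : ℝ) T, 0 ≤ Γ t ∧ Γ t ≤ Real.exp (σ ^ 2 * (T - t)) :=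
  vdie_apriori_bound_general T σ R ρ γ l hR0 hR1 hρ hργ hl0 hl1 α hα Γ Γ' h
end
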